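/- arXiv:2401.15732 — 7 statements merged into one kernel-verified Lean document; each statement's English description precedes it below -/
import Mathlib

section
/- Let X, Y, Z be n×n complex matrices and κ a complex scalar satisfying the cyclic commutation relations [X,Y] = κZ, [Y,Z] = κX, [Z,X] = κY. Then for any complex scalar p, exp(-p•Z) * X * exp(p•Z) = cos(κp) • X - sin(κp) • Y. -/
/-!
`X + iY` and `X - iY` are eigenvectors of `ad Z` with eigenvalues `-iκ` and `iκ`, so conjugation
by `exp (p • Z)` multiplies them by `exp (iκp)` and `exp (-iκp)`; averaging the two recovers `X`,
and Euler's formulas turn the result into `cos (κp) • X - sin (κp) • Y`.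
-/

open NormedSpace

section Commutator

variable {K R : Type*} [CommRing K] [Ring R] [Algebra K R]

theorem mul_add_smul_eq_of_commutator_eq {X Y Z : R} {κ s : K} (hs : s * s = -1)
    (hYZ : Y * Z - Z * Y = κ • X) (hZX : Z * X - X * Z = κ • Y) :
    Z * (X + s • Y) = (X + s • Y) * Z + (-(s * κ)) • (X + s • Y) := by
  have hZY : Z * Y = Y * Z - κ • X := by rw [← hYZ]; abel
  have hZX' : Z * X = X * Z + κ • Y := by rw [← hZX]; abel
  rw [mul_add, mul_smul_comm, hZX', hZY, add_mul, smul_mul_assoc, smul_add, smul_smul,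
    show -(s * κ) * s = κ by linear_combination -κ * hs]
  module

end Commutator

section BanachAlgebra

variable {𝔸 : Type*} [NormedRing 𝔸] [NormedAlgebra ℂ 𝔸]

theorem exp_smul_one (c : ℂ) : exp (c • (1 : 𝔸)) = Complex.exp c • (1 : 𝔸) := by
  rw [← Algebra.algebraMap_eq_smul_one, ← algebraMap_exp_comm (𝕂 := ℂ), Complex.exp_eq_exp_ℂ,
    Algebra.algebraMap_eq_smul_one]

variable [CompleteSpace 𝔸]

theorem exp_neg_smul_mul_mul_exp_smul_of_mul_eq {Z A : 𝔸} {l : ℂ} (h : Z * A = A * Z + l • A)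
    (p : ℂ) : exp (-p • Z) * A * exp (p • Z) = Complex.exp (-(p * l)) • A := by
  let +nondep : NormedAlgebra ℚ 𝔸 := .restrictScalars ℚ ℂ 𝔸
  have hsemiconj : SemiconjBy A (p • Z) (p • Z - (p * l) • 1) := by
    rw [SemiconjBy, sub_mul, smul_mul_assoc, smul_mul_assoc, h, one_mul, mul_smul_comm]
    module
  have hexp : exp (-(p • Z - (p * l) • 1)) = Complex.exp (p * l) • exp (-p • Z) := by
    rw [neg_sub', sub_neg_eq_add, neg_smul,
      exp_add_of_commute ((Commute.one_right _).smul_right _), exp_smul_one, mul_smul_one]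
  have hfix := hsemiconj.exp_neg_mul_mul_exp_eq_self
  rw [hexp, smul_mul_assoc, smul_mul_assoc] at hfix
  calc exp (-p • Z) * A * exp (p • Z)
      = Complex.exp (-(p * l)) • Complex.exp (p * l) • (exp (-p • Z) * A * exp (p • Z)) := by
        rw [smul_smul, ← Complex.exp_add, neg_add_cancel, Complex.exp_zero, one_smul]
    _ = Complex.exp (-(p * l)) • A := by rw [hfix]

theorem exp_neg_smul_mul_mul_exp_smul_eq_cos_smul_sub_sin_smul {X Y Z : 𝔸} {κ : ℂ}
    (hYZ : Y * Z - Z * Y = κ • X) (hZX : Z * X - X * Z = κ • Y) (p : ℂ) :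
    exp (-p • Z) * X * exp (p • Z) = Complex.cos (κ * p) • X - Complex.sin (κ * p) • Y := by
  set U := exp (-p • Z)
  set V := exp (p • Z)
  have hplus := exp_neg_smul_mul_mul_exp_smul_of_mul_eq
    (mul_add_smul_eq_of_commutator_eq Complex.I_mul_I hYZ hZX) p
  have hminus := exp_neg_smul_mul_mul_exp_smul_of_mul_eq
    (mul_add_smul_eq_of_commutator_eq (s := -Complex.I) (by simp) hYZ hZX) p
  calc U * X * V
      = (2⁻¹ : ℂ) • (U * (X + Complex.I • Y) * V + U * (X + (-Complex.I) • Y) * V) := by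
        simp only [mul_add, add_mul, mul_smul_comm, smul_mul_assoc]
        module
    _ = (2⁻¹ : ℂ) • (Complex.exp (-(p * -(Complex.I * κ))) • (X + Complex.I • Y)
          + Complex.exp (-(p * -(-Complex.I * κ))) • (X + (-Complex.I) • Y)) := by
        rw [hplus, hminus]
    _ = Complex.cos (κ * p) • X - Complex.sin (κ * p) • Y := by
        rw [Complex.cos, Complex.sin]
        match_scalars <;> ring_nf

end BanachAlgebra

theorem stmt0_general {n : ℕ} (X Y Z : Matrix (Fin n) (Fin n) ℂ) (κ : ℂ)
    (hYZ : Y * Z - Z * Y = κ • X)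
    (hZX : Z * X - X * Z = κ • Y) (p : ℂ) :
    exp (-p • Z) * X * exp (p • Z)
      = Complex.cos (κ * p) • X - Complex.sin (κ * p) • Y := by
  open scoped Matrix.Norms.Operator in
  exact exp_neg_smul_mul_mul_exp_smul_eq_cos_smul_sub_sin_smul hYZ hZX p

theorem stmt0 {n : ℕ} (X Y Z : Matrix (Fin n) (Fin n) ℂ) (κ : ℂ)
    (hXY : X * Y - Y * X = κ • Z) (hYZ : Y * Z - Z * Y = κ • X)
    (hZX : Z * X - X * Z = κ • Y) (p : ℂ) :
    exp (-p • Z) * X * exp (p • Z)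
      = Complex.cos (κ * p) • X - Complex.sin (κ * p) • Y :=
  stmt0_general X Y Z κ hYZ hZX p
end

section
/- Let X, Y, Z be n×n complex matrices and κ a complex scalar satisfying the cyclic commutation relations [X,Y] = κZ, [Y,Z] = κX, [Z,X] = κY. Then for any complex scalar p, exp(-p•Z) * Y * exp(p•Z) = cos(κp) • Y + sin(κp) • X. -/
/-! Conjugation by `exp (t • Z)` is differentiable in `t` with derivative the commutator with `Z`.
By `[Y, Z] = κ X` and `[X, Z] = -κ Y`, the pair `f t = exp (-t • Z) * Y * exp (t • Z)`,
`g t = exp (-t • Z) * X * exp (t • Z)` solves the rotation system `f' = κ g`, `g' = -κ f`, whose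
solutions are `f t = cos (κ t) f 0 + sin (κ t) g 0`: the combinations `cos • f - sin • g` and
`sin • f + cos • g` have zero derivative. -/

open NormedSpace

theorem hasDerivAt_exp_neg_smul_mul_mul_exp_smul {𝕂 𝔸 : Type*} [RCLike 𝕂] [NormedRing 𝔸]
    [NormedAlgebra 𝕂 𝔸] [CompleteSpace 𝔸] (Z W : 𝔸) (t : 𝕂) :
    HasDerivAt (fun u : 𝕂 => exp (-u • Z) * W * exp (u • Z))
      (exp (-t • Z) * (W * Z - Z * W) * exp (t • Z)) t := by
  have hneg : HasDerivAt (fun u : 𝕂 => exp (-u • Z)) (exp (-t • Z) * -Z) t := by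
    simpa only [smul_neg, neg_smul] using hasDerivAt_exp_smul_const (𝕂 := 𝕂) (-Z) t
  have hcomm : exp (t • Z) * Z = Z * exp (t • Z) := ((Commute.refl Z).smul_left t).exp_left
  refine ((hneg.mul_const W).mul (hasDerivAt_exp_smul_const (𝕂 := 𝕂) Z t)).congr_deriv ?_
  rw [hcomm]
  noncomm_ring

theorem eq_cos_smul_add_sin_smul_of_hasDerivAt {E : Type*} [NormedAddCommGroup E]
    [NormedSpace ℂ E] {f g : ℂ → E} {κ : ℂ} (hf : ∀ t, HasDerivAt f (κ • g t) t)
    (hg : ∀ t, HasDerivAt g (-(κ • f t)) t) (t : ℂ) :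
    f t = Complex.cos (κ * t) • f 0 + Complex.sin (κ * t) • g 0 := by
  have hcos (s : ℂ) : HasDerivAt (fun u => Complex.cos (κ * u)) (-Complex.sin (κ * s) * κ) s := by
    simpa using ((hasDerivAt_id s).const_mul κ).ccos
  have hsin (s : ℂ) : HasDerivAt (fun u => Complex.sin (κ * u)) (Complex.cos (κ * s) * κ) s := by
    simpa using ((hasDerivAt_id s).const_mul κ).csin
  set A : ℂ → E := fun s => Complex.cos (κ * s) • f s - Complex.sin (κ * s) • g s
  set B : ℂ → E := fun s => Complex.sin (κ * s) • f s + Complex.cos (κ * s) • g s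
  have hA (s : ℂ) : HasDerivAt A 0 s := by
    refine (((hcos s).smul (hf s)).sub ((hsin s).smul (hg s))).congr_deriv ?_
    simp only [smul_smul, smul_neg]
    module
  have hB (s : ℂ) : HasDerivAt B 0 s := by
    refine (((hsin s).smul (hf s)).add ((hcos s).smul (hg s))).congr_deriv ?_
    simp only [smul_smul, smul_neg]
    module
  have hA_const : A t = A 0 :=
    is_const_of_deriv_eq_zero (fun s => (hA s).differentiableAt) (fun s => (hA s).deriv) t 0
  have hB_const : B t = B 0 :=
    is_const_of_deriv_eq_zero (fun s => (hB s).differentiableAt) (fun s => (hB s).deriv) t 0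
  calc f t = (Complex.cos (κ * t) ^ 2 + Complex.sin (κ * t) ^ 2) • f t := by
        rw [Complex.cos_sq_add_sin_sq, one_smul]
    _ = Complex.cos (κ * t) • A t + Complex.sin (κ * t) • B t := by module
    _ = Complex.cos (κ * t) • f 0 + Complex.sin (κ * t) • g 0 := by
        simp [hA_const, hB_const, A, B]

theorem stmt1_general {n : ℕ} (X Y Z : Matrix (Fin n) (Fin n) ℂ) (κ : ℂ)
    (hYZ : Y * Z - Z * Y = κ • X)
    (hZX : Z * X - X * Z = κ • Y) (p : ℂ) :
    exp (-p • Z) * Y * exp (p • Z)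
      = Complex.cos (κ * p) • Y + Complex.sin (κ * p) • X := by
  -- `exp` depends only on the topology; any Banach-algebra norm inducing it will do.
  let _ : NormedRing (Matrix (Fin n) (Fin n) ℂ) := Matrix.linftyOpNormedRing
  let _ : NormedAlgebra ℂ (Matrix (Fin n) (Fin n) ℂ) := Matrix.linftyOpNormedAlgebra
  have hXZ : X * Z - Z * X = -(κ • Y) := by rw [← hZX]; abel
  have hY (t : ℂ) := hasDerivAt_exp_neg_smul_mul_mul_exp_smul Z Y t
  have hX (t : ℂ) := hasDerivAt_exp_neg_smul_mul_mul_exp_smul Z X t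
  simp only [hYZ, hXZ, mul_smul_comm, smul_mul_assoc, mul_neg, neg_mul] at hY hX
  have h := eq_cos_smul_add_sin_smul_of_hasDerivAt hY hX p
  simp only [neg_zero, zero_smul, exp_zero, mul_one, one_mul] at h
  exact h

theorem stmt1 {n : ℕ} (X Y Z : Matrix (Fin n) (Fin n) ℂ) (κ : ℂ)
    (hXY : X * Y - Y * X = κ • Z) (hYZ : Y * Z - Z * Y = κ • X)
    (hZX : Z * X - X * Z = κ • Y) (p : ℂ) :
    exp (-p • Z) * Y * exp (p • Z)
      = Complex.cos (κ * p) • Y + Complex.sin (κ * p) • X :=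
  stmt1_general X Y Z κ hYZ hZX p
end

section
/- Let X, Y, Z be n×n complex matrices and κ a complex scalar satisfying the cyclic commutation relations [X,Y] = κZ, [Y,Z] = κX, [Z,X] = κY, and let a, b, p be complex scalars. Then exp(-p•Z) * (a•X + b•Y) * exp(p•Z) = (a*cos(κp) + b*sin(κp)) • X + (b*cos(κp) - a*sin(κp)) • Y. -/
open NormedSpace

/-! With `U± = X ± i Y`, the relations say `[Z, U±] = ∓ iκ U±`, so `U±` are eigenvectors of
`ad Z`. Conjugation by `exp (p Z)` therefore only multiplies `U±` by `exp (± iκp)`, and writing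
`a X + b Y` in terms of `U±` and expanding `exp (± iκp)` by Euler's formula gives the rotation. -/

section
variable {𝕂 A : Type*} [RCLike 𝕂] [NormedRing A] [NormedAlgebra 𝕂 A] [CompleteSpace A]

theorem exp_neg_smul_mul_mul_exp_smul_of_commutator_eq_smul {Z U : A} {c : 𝕂}
    (h : Z * U - U * Z = c • U) (t : 𝕂) :
    exp (-t • Z) * U * exp (t • Z) = exp (-(t * c)) • U := by
  let +nondep : NormedAlgebra ℚ A := .restrictScalars ℚ 𝕂 A
  have hsemiconj : SemiconjBy U (t • Z + algebraMap 𝕂 A (t * c)) (t • Z) := by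
    rw [SemiconjBy, mul_add, ← Algebra.commutes, ← Algebra.smul_def, mul_smul_comm,
      smul_mul_assoc, mul_smul, ← h, smul_sub]
    abel
  have hexp_add : exp (t • Z + algebraMap 𝕂 A (t * c))
      = exp (t • Z) * algebraMap 𝕂 A (exp (t * c)) := by
    rw [exp_add_of_commute (Algebra.commutes _ _).symm, algebraMap_exp_comm]
  have hconj := hsemiconj.exp_neg_mul_mul_exp_eq_self
  rw [hexp_add, ← mul_assoc, ← Algebra.commutes, ← Algebra.smul_def, ← neg_smul] at hconj
  rw [exp_neg (t * c), eq_inv_smul_iff₀ (isUnit_exp _).ne_zero, hconj]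

end

section
variable {A : Type*} [NormedRing A] [NormedAlgebra ℂ A] [CompleteSpace A]

open Complex in
theorem exp_neg_smul_mul_mul_exp_smul_eq_rotation (X Y Z : A) (κ : ℂ)
    (hYZ : Y * Z - Z * Y = κ • X) (hZX : Z * X - X * Z = κ • Y) (a b p : ℂ) :
    exp (-p • Z) * (a • X + b • Y) * exp (p • Z)
      = (a * cos (κ * p) + b * sin (κ * p)) • X + (b * cos (κ * p) - a * sin (κ * p)) • Y := by
  have hplus : Z * (X + I • Y) - (X + I • Y) * Z = (-(κ * I)) • (X + I • Y) := by
    rw [mul_add, add_mul, mul_smul_comm, smul_mul_assoc]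
    linear_combination (norm := module) hZX - I • hYZ + I_sq • (κ • Y)
  have hminus : Z * (X - I • Y) - (X - I • Y) * Z = (κ * I) • (X - I • Y) := by
    rw [mul_sub, sub_mul, mul_smul_comm, smul_mul_assoc]
    linear_combination (norm := module) hZX + I • hYZ + I_sq • (κ • Y)
  have hconj_plus :
      exp (-p • Z) * (X + I • Y) * exp (p • Z) = cexp (κ * p * I) • (X + I • Y) := by
    rw [exp_neg_smul_mul_mul_exp_smul_of_commutator_eq_smul hplus, ← exp_eq_exp_ℂ]
    ring_nf
  have hconj_minus :
      exp (-p • Z) * (X - I • Y) * exp (p • Z) = cexp (-(κ * p) * I) • (X - I • Y) := by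
    rw [exp_neg_smul_mul_mul_exp_smul_of_commutator_eq_smul hminus, ← exp_eq_exp_ℂ]
    ring_nf
  have hdecomp : a • X + b • Y
      = ((a - b * I) / 2) • (X + I • Y) + ((a + b * I) / 2) • (X - I • Y) := by
    match_scalars
    · ring
    · linear_combination b * I_sq
  rw [hdecomp, mul_add, add_mul, mul_smul_comm, smul_mul_assoc, mul_smul_comm, smul_mul_assoc,
    hconj_plus, hconj_minus, exp_mul_I, ← cos_sub_sin_I]
  match_scalars
  · linear_combination (-b * sin (κ * p)) * I_sq
  · linear_combination (a * sin (κ * p) - b * cos (κ * p)) * I_sq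

end

theorem stmt3_general {n : ℕ} (X Y Z : Matrix (Fin n) (Fin n) ℂ) (κ : ℂ)
    (hYZ : Y * Z - Z * Y = κ • X)
    (hZX : Z * X - X * Z = κ • Y) (a b p : ℂ) :
    exp (-p • Z) * (a • X + b • Y) * exp (p • Z)
      = (a * Complex.cos (κ * p) + b * Complex.sin (κ * p)) • X
        + (b * Complex.cos (κ * p) - a * Complex.sin (κ * p)) • Y := by
  open scoped Matrix.Norms.Operator in
  exact exp_neg_smul_mul_mul_exp_smul_eq_rotation X Y Z κ hYZ hZX a b p

theorem stmt3 {n : ℕ} (X Y Z : Matrix (Fin n) (Fin n) ℂ) (κ : ℂ)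
    (hXY : X * Y - Y * X = κ • Z) (hYZ : Y * Z - Z * Y = κ • X)
    (hZX : Z * X - X * Z = κ • Y) (a b p : ℂ) :
    exp (-p • Z) * (a • X + b • Y) * exp (p • Z)
      = (a * Complex.cos (κ * p) + b * Complex.sin (κ * p)) • X
        + (b * Complex.cos (κ * p) - a * Complex.sin (κ * p)) • Y :=
  stmt3_general X Y Z κ hYZ hZX a b p
end

section
/- Let X, Y, Z be n×n complex matrices, κ a complex scalar with the cyclic relations [X,Y] = κZ, [Y,Z] = κX, [Z,X] = κY, and let a, b, p, q be complex scalars such that a = q * cos(κp) and b = q * sin(κp). Then exp(a•X + b•Y) = exp(p•Z) * exp(q•X) * exp(-p•Z). -/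
/-!
Conjugation by `exp (t • Z)` rotates the plane spanned by `X` and `Y`: the curve
`G t = cos (κ t) • X + sin (κ t) • Y` satisfies `G' = Z * G - G * Z` by the two cyclic relations
involving `Z`, so `exp (-(t • Z)) * G t * exp (t • Z)` has zero derivative and equals `G 0 = X`.
Hence `a • X + b • Y = q • G p` is the conjugate of `q • X` by `exp (p • Z)`, and the exponential
of a conjugate is the conjugate of the exponential.
-/

open NormedSpace

section

variable {𝕂 A : Type*} [RCLike 𝕂] [NormedRing A] [NormedAlgebra 𝕂 A] [NormedAlgebra ℚ A]
  [CompleteSpace A]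

theorem semiconjBy_exp_smul_of_hasDerivAt_commutator {Z : A} {G : 𝕂 → A}
    (hG : ∀ t, HasDerivAt G (Z * G t - G t * Z) t) (t : 𝕂) :
    SemiconjBy (exp (t • Z)) (G 0) (G t) := by
  have hderiv : ∀ s, HasDerivAt (fun s : 𝕂 => exp (s • -Z) * G s * exp (s • Z)) 0 s := fun s =>
    (((hasDerivAt_exp_smul_const (-Z) s).mul (hG s)).mul
      (hasDerivAt_exp_smul_const' Z s)).congr_deriv (by simp only [Pi.mul_apply]; noncomm_ring)
  have hconst : exp (t • -Z) * G t * exp (t • Z) = G 0 := by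
    simpa using is_const_of_deriv_eq_zero (fun s => (hderiv s).differentiableAt)
      (fun s => (hderiv s).deriv) t 0
  have hinv : exp (t • Z) * exp (t • -Z) = 1 := by
    rw [smul_neg, ← exp_add_of_commute (Commute.refl _).neg_right, add_neg_cancel, exp_zero]
  calc exp (t • Z) * G 0 = exp (t • Z) * exp (t • -Z) * G t * exp (t • Z) := by
        rw [← hconst]; noncomm_ring
    _ = G t * exp (t • Z) := by rw [hinv, one_mul]

end

section

variable {A : Type*} [NormedRing A] [NormedAlgebra ℂ A] {X Y Z : A} {κ : ℂ}

theorem hasDerivAt_cos_smul_add_sin_smul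
    (hYZ : Y * Z - Z * Y = κ • X) (hZX : Z * X - X * Z = κ • Y) (t : ℂ) :
    HasDerivAt (fun t => Complex.cos (κ * t) • X + Complex.sin (κ * t) • Y)
      (Z * (Complex.cos (κ * t) • X + Complex.sin (κ * t) • Y)
        - (Complex.cos (κ * t) • X + Complex.sin (κ * t) • Y) * Z) t := by
  have hκt : HasDerivAt (fun t => κ * t) κ t := by simpa using (hasDerivAt_id t).const_mul κ
  refine ((hκt.ccos.smul_const X).add (hκt.csin.smul_const Y)).congr_deriv ?_
  have hcomm : Z * (Complex.cos (κ * t) • X + Complex.sin (κ * t) • Y)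
        - (Complex.cos (κ * t) • X + Complex.sin (κ * t) • Y) * Z
      = Complex.cos (κ * t) • (Z * X - X * Z) - Complex.sin (κ * t) • (Y * Z - Z * Y) := by
    simp only [mul_add, add_mul, mul_smul_comm, smul_mul_assoc, smul_sub]; abel
  rw [hcomm, hYZ, hZX, smul_smul, smul_smul]
  module

variable [NormedAlgebra ℚ A] [CompleteSpace A]

theorem semiconjBy_exp_smul_cos_smul_add_sin_smul
    (hYZ : Y * Z - Z * Y = κ • X) (hZX : Z * X - X * Z = κ • Y) (p : ℂ) :
    SemiconjBy (exp (p • Z)) X (Complex.cos (κ * p) • X + Complex.sin (κ * p) • Y) := by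
  simpa using semiconjBy_exp_smul_of_hasDerivAt_commutator
    (hasDerivAt_cos_smul_add_sin_smul hYZ hZX) p

theorem exp_smul_cos_smul_add_sin_smul
    (hYZ : Y * Z - Z * Y = κ • X) (hZX : Z * X - X * Z = κ • Y) (p q : ℂ) :
    exp (q • (Complex.cos (κ * p) • X + Complex.sin (κ * p) • Y))
      = exp (p • Z) * exp (q • X) * exp (-(p • Z)) := by
  have h := ((semiconjBy_exp_smul_cos_smul_add_sin_smul hYZ hZX p).smul_right q).exp_right
  rw [h.eq, mul_assoc, ← exp_add_of_commute (Commute.refl _).neg_right, add_neg_cancel,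
    exp_zero, mul_one]

end

theorem stmt4_general {n : ℕ} (X Y Z : Matrix (Fin n) (Fin n) ℂ) (κ : ℂ)
    (hYZ : Y * Z - Z * Y = κ • X)
    (hZX : Z * X - X * Z = κ • Y) (a b p q : ℂ)
    (ha : a = q * Complex.cos (κ * p)) (hb : b = q * Complex.sin (κ * p)) :
    exp (a • X + b • Y) = exp (p • Z) * exp (q • X) * exp (-p • Z) := by
  -- `exp` does not depend on the norm, so any Banach-algebra norm on matrices will do.
  let := Matrix.linftyOpNormedRing (n := Fin n) (α := ℂ)
  let := Matrix.linftyOpNormedAlgebra (n := Fin n) (R := ℂ) (α := ℂ)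
  let := Matrix.linftyOpNormedAlgebra (n := Fin n) (R := ℚ) (α := ℂ)
  rw [ha, hb, mul_smul, mul_smul, ← smul_add, neg_smul]
  exact exp_smul_cos_smul_add_sin_smul hYZ hZX p q

theorem stmt4 {n : ℕ} (X Y Z : Matrix (Fin n) (Fin n) ℂ) (κ : ℂ)
    (hXY : X * Y - Y * X = κ • Z) (hYZ : Y * Z - Z * Y = κ • X)
    (hZX : Z * X - X * Z = κ • Y) (a b p q : ℂ)
    (ha : a = q * Complex.cos (κ * p)) (hb : b = q * Complex.sin (κ * p)) :
    exp (a • X + b • Y) = exp (p • Z) * exp (q • X) * exp (-p • Z) :=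
  stmt4_general X Y Z κ hYZ hZX a b p q ha hb
end

section
/- Let X, Y, Z be n×n complex matrices with [X,Y] = κZ, [Y,Z] = κX, [Z,X] = κY for a scalar κ, and let a, b, p', q be complex scalars satisfying b = q * cos(κp') and a = -q * sin(κp'). Then exp(a•X + b•Y) = exp(p'•Z) * exp(q•Y) * exp(-p'•Z). -/
/-!
Conjugation by `exp (t • Z)` rotates the plane spanned by `X` and `Y`: the curve
`t ↦ q • (cos (κ t) • Y - sin (κ t) • X)` solves `V' = Z V - V Z` by the commutation relations,
and any solution satisfies `V t = exp (t • Z) * V 0 * exp (-t • Z)`, because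
`exp (-t • Z) * V t * exp (t • Z)` has zero derivative. Since `exp` commutes with conjugation by
units, exponentiating at `t = p'` gives the theorem.
-/

open NormedSpace

section BanachAlgebra

variable {𝔸 : Type*} [NormedRing 𝔸] [CompleteSpace 𝔸]

theorem exp_mul_exp_neg (𝕂 : Type*) [RCLike 𝕂] [NormedAlgebra 𝕂 𝔸] (x : 𝔸) :
    exp x * exp (-x) = 1 := by
  -- `exp` does not depend on the scalars, so the library's `ℚ`-algebra lemmas apply.
  let := NormedAlgebra.restrictScalars ℚ 𝕂 𝔸
  let := invertibleExp x
  rw [← invOf_exp, mul_invOf_self]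

theorem exp_conj_exp (𝕂 : Type*) [RCLike 𝕂] [NormedAlgebra 𝕂 𝔸] (x y : 𝔸) :
    exp (exp x * y * exp (-x)) = exp x * exp y * exp (-x) := by
  let := NormedAlgebra.restrictScalars ℚ 𝕂 𝔸
  let := invertibleExp x
  rw [← invOf_exp]
  exact exp_units_conj (unitOfInvertible (exp x)) y

variable {𝕂 : Type*} [RCLike 𝕂] [NormedAlgebra 𝕂 𝔸]

theorem eq_exp_smul_mul_mul_exp_neg_smul_of_hasDerivAt {Z : 𝔸} {V : 𝕂 → 𝔸}
    (hV : ∀ t, HasDerivAt V (Z * V t - V t * Z) t) (t : 𝕂) :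
    V t = exp (t • Z) * V 0 * exp (-t • Z) := by
  have hW : ∀ u, HasDerivAt (fun s => exp (-s • Z) * V s * exp (s • Z)) 0 u := by
    intro u
    have hexp_neg : HasDerivAt (fun s : 𝕂 => exp (-s • Z)) (exp (-u • Z) * -Z) u := by
      simpa only [neg_smul, smul_neg] using hasDerivAt_exp_smul_const (-Z) u
    refine ((hexp_neg.mul (hV u)).mul (hasDerivAt_exp_smul_const' Z u)).congr_deriv ?_
    simp only [Pi.mul_apply]
    noncomm_ring
  have hconst : exp (-t • Z) * V t * exp (t • Z) = V 0 := by
    simpa using is_const_of_deriv_eq_zero (fun u => (hW u).differentiableAt)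
      (fun u => (hW u).deriv) t 0
  rw [← hconst, neg_smul]
  simp only [← mul_assoc, exp_mul_exp_neg 𝕂, one_mul]
  rw [mul_assoc, exp_mul_exp_neg 𝕂, mul_one]

end BanachAlgebra

section Rotation

variable {𝔸 : Type*} [NormedRing 𝔸] [NormedAlgebra ℂ 𝔸]

noncomputable def rotationCurve (X Y : 𝔸) (κ q t : ℂ) : 𝔸 :=
  (-q * Complex.sin (κ * t)) • X + (q * Complex.cos (κ * t)) • Y

theorem rotationCurve_zero (X Y : 𝔸) (κ q : ℂ) : rotationCurve X Y κ q 0 = q • Y := by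
  simp [rotationCurve]

variable {X Y Z : 𝔸} {κ : ℂ}

theorem commutator_rotationCurve (hYZ : Y * Z - Z * Y = κ • X)
    (hZX : Z * X - X * Z = κ • Y) (q t : ℂ) :
    Z * rotationCurve X Y κ q t - rotationCurve X Y κ q t * Z =
      (-q * (Complex.cos (κ * t) * κ)) • X + (q * (-Complex.sin (κ * t) * κ)) • Y := by
  have hZY : Z * Y = Y * Z - κ • X := by rw [← hYZ]; abel
  have hZX' : Z * X = X * Z + κ • Y := by rw [← hZX]; abel
  simp only [rotationCurve, mul_add, add_mul, mul_smul_comm, smul_mul_assoc, hZY, hZX']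
  module

theorem hasDerivAt_rotationCurve (hYZ : Y * Z - Z * Y = κ • X)
    (hZX : Z * X - X * Z = κ • Y) (q t : ℂ) :
    HasDerivAt (rotationCurve X Y κ q)
      (Z * rotationCurve X Y κ q t - rotationCurve X Y κ q t * Z) t := by
  rw [commutator_rotationCurve hYZ hZX]
  have hκ : HasDerivAt (fun s : ℂ => κ * s) κ t := by simpa using (hasDerivAt_id t).const_mul κ
  exact ((((Complex.hasDerivAt_sin _).comp t hκ).const_mul (-q)).smul_const X).add
    ((((Complex.hasDerivAt_cos _).comp t hκ).const_mul q).smul_const Y)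

theorem exp_rotationCurve [CompleteSpace 𝔸] (hYZ : Y * Z - Z * Y = κ • X)
    (hZX : Z * X - X * Z = κ • Y) (q t : ℂ) :
    exp (rotationCurve X Y κ q t) = exp (t • Z) * exp (q • Y) * exp (-t • Z) := by
  rw [eq_exp_smul_mul_mul_exp_neg_smul_of_hasDerivAt (hasDerivAt_rotationCurve hYZ hZX q) t,
    rotationCurve_zero, neg_smul, exp_conj_exp ℂ]

end Rotation

theorem stmt5_general {n : ℕ} (X Y Z : Matrix (Fin n) (Fin n) ℂ) (κ : ℂ)
    (hYZ : Y * Z - Z * Y = κ • X)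
    (hZX : Z * X - X * Z = κ • Y) (a b p' q : ℂ)
    (hb : b = q * Complex.cos (κ * p')) (ha : a = -q * Complex.sin (κ * p')) :
    NormedSpace.exp (a • X + b • Y) = NormedSpace.exp (p' • Z) * NormedSpace.exp (q • Y) * NormedSpace.exp (-p' • Z) := by
  -- any Banach algebra norm on matrices will do
  let := Matrix.linftyOpNormedRing (n := Fin n) (α := ℂ)
  let := Matrix.linftyOpNormedAlgebra (n := Fin n) (R := ℂ) (α := ℂ)
  subst ha hb
  exact exp_rotationCurve hYZ hZX q p'

theorem stmt5 {n : ℕ} (X Y Z : Matrix (Fin n) (Fin n) ℂ) (κ : ℂ)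
    (hXY : X * Y - Y * X = κ • Z) (hYZ : Y * Z - Z * Y = κ • X)
    (hZX : Z * X - X * Z = κ • Y) (a b p' q : ℂ)
    (hb : b = q * Complex.cos (κ * p')) (ha : a = -q * Complex.sin (κ * p')) :
    NormedSpace.exp (a • X + b • Y) = NormedSpace.exp (p' • Z) * NormedSpace.exp (q • Y) * NormedSpace.exp (-p' • Z) :=
  stmt5_general X Y Z κ hYZ hZX a b p' q hb ha
end

section
/- Let X, Y, Z be n×n complex matrices satisfying [X,Y] = κZ, [Y,Z] = κX, [Z,X] = κY for a scalar κ. Then for any complex scalar p, exp(-p•X) * Y * exp(p•X) = cos(κp) • Y - sin(κp) • Z and exp(-p•X) * Z * exp(p•X) = cos(κp) • Z + sin(κp) • Y. -/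
open NormedSpace

/-! `Y ± iZ` are eigenvectors of `ad X` with eigenvalues `∓iκ`, so conjugation by `exp (p • X)`
multiplies them by `exp (±iκp)`; the real and imaginary parts of this recombine into cosines and
sines. For the first step, `b * (t • a + t * c) = t • a * b` makes `b` intertwine the exponentials
of `t • a + t * c` and `t • a`, and the scalar `t * c` splits off as a factor `exp (t * c)`. -/

section BanachAlgebra

variable {𝔸 : Type*} [NormedRing 𝔸] [NormedAlgebra ℂ 𝔸] [CompleteSpace 𝔸]

theorem NormedSpace.exp_add_algebraMap (a : 𝔸) (c : ℂ) :
    exp (a + algebraMap ℂ 𝔸 c) = Complex.exp c • exp a := by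
  let := NormedAlgebra.restrictScalars ℚ ℂ 𝔸
  rw [exp_add_of_commute (Algebra.commutes c a).symm, ← algebraMap_exp_comm,
    ← Complex.exp_eq_exp_ℂ, ← Algebra.commutes, ← Algebra.smul_def]

theorem NormedSpace.exp_neg_smul_mul_mul_exp_smul {a b : 𝔸} {c : ℂ}
    (h : a * b - b * a = c • b) (t : ℂ) :
    exp (-t • a) * b * exp (t • a) = Complex.exp (-(t * c)) • b := by
  let := NormedAlgebra.restrictScalars ℚ ℂ 𝔸
  have hsemi : SemiconjBy b (t • a + algebraMap ℂ 𝔸 (t * c)) (t • a) := by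
    rw [SemiconjBy, mul_add, ← Algebra.commutes, ← Algebra.smul_def, mul_smul_comm,
      smul_mul_assoc, ← smul_smul, ← smul_add, ← h, add_sub_cancel]
  have := hsemi.exp_neg_mul_mul_exp_eq_self
  rw [exp_add_algebraMap, mul_smul_comm, ← neg_smul] at this
  rw [Complex.exp_neg, eq_inv_smul_iff₀ (Complex.exp_ne_zero _), this]

end BanachAlgebra

theorem Matrix.exp_neg_smul_mul_mul_exp_smul {n : Type*} [Fintype n] [DecidableEq n]
    {A B : Matrix n n ℂ} {c : ℂ} (h : A * B - B * A = c • B) (t : ℂ) :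
    exp (-t • A) * B * exp (t • A) = Complex.exp (-(t * c)) • B :=
  open scoped Matrix.Norms.Operator in NormedSpace.exp_neg_smul_mul_mul_exp_smul h t

theorem LinearMap.apply_eq_cos_sub_sin_and_apply_eq_cos_add_sin {M : Type*} [AddCommGroup M]
    [Module ℂ M] (f : M →ₗ[ℂ] M) {y z : M} {θ : ℂ}
    (hplus : f (y + Complex.I • z) = Complex.exp (θ * Complex.I) • (y + Complex.I • z))
    (hminus : f (y - Complex.I • z) = Complex.exp (-θ * Complex.I) • (y - Complex.I • z)) :
    f y = Complex.cos θ • y - Complex.sin θ • z ∧ f z = Complex.cos θ • z + Complex.sin θ • y := by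
  rw [Complex.exp_mul_I] at hplus hminus
  rw [Complex.cos_neg, Complex.sin_neg] at hminus
  have hy : y = (2 : ℂ)⁻¹ • ((y + Complex.I • z) + (y - Complex.I • z)) := by module
  have hz : z = (-(2 : ℂ)⁻¹ * Complex.I) • ((y + Complex.I • z) - (y - Complex.I • z)) := by
    match_scalars <;> grind [Complex.I_sq]
  constructor
  · conv_lhs => rw [hy, map_smul, map_add, hplus, hminus]
    match_scalars <;> grind [Complex.I_sq]
  · conv_lhs => rw [hz, map_smul, map_sub, hplus, hminus]
    match_scalars <;> grind [Complex.I_sq]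

theorem stmt12_general {n : ℕ} (X Y Z : Matrix (Fin n) (Fin n) ℂ) (κ : ℂ)
    (hXY : X * Y - Y * X = κ • Z)
    (hZX : Z * X - X * Z = κ • Y) (p : ℂ) :
    exp (-p • X) * Y * exp (p • X)
        = Complex.cos (κ * p) • Y - Complex.sin (κ * p) • Z ∧
    exp (-p • X) * Z * exp (p • X)
        = Complex.cos (κ * p) • Z + Complex.sin (κ * p) • Y := by
  have hplus : X * (Y + Complex.I • Z) - (Y + Complex.I • Z) * X
      = -(κ * Complex.I) • (Y + Complex.I • Z) := by
    rw [mul_add, add_mul, mul_smul_comm, smul_mul_assoc, add_sub_add_comm, ← smul_sub,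
      hXY, ← neg_sub (Z * X), hZX]
    match_scalars <;> grind [Complex.I_sq]
  have hminus : X * (Y - Complex.I • Z) - (Y - Complex.I • Z) * X
      = (κ * Complex.I) • (Y - Complex.I • Z) := by
    rw [mul_sub, sub_mul, mul_smul_comm, smul_mul_assoc, sub_sub_sub_comm, ← smul_sub,
      hXY, ← neg_sub (Z * X), hZX]
    match_scalars <;> grind [Complex.I_sq]
  apply LinearMap.apply_eq_cos_sub_sin_and_apply_eq_cos_add_sin
    (LinearMap.mulLeftRight ℂ (exp (-p • X), exp (p • X)))
  · rw [LinearMap.mulLeftRight_apply, Matrix.exp_neg_smul_mul_mul_exp_smul hplus]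
    ring_nf
  · rw [LinearMap.mulLeftRight_apply, Matrix.exp_neg_smul_mul_mul_exp_smul hminus]
    ring_nf

theorem stmt12 {n : ℕ} (X Y Z : Matrix (Fin n) (Fin n) ℂ) (κ : ℂ)
    (hXY : X * Y - Y * X = κ • Z) (hYZ : Y * Z - Z * Y = κ • X)
    (hZX : Z * X - X * Z = κ • Y) (p : ℂ) :
    exp (-p • X) * Y * exp (p • X)
        = Complex.cos (κ * p) • Y - Complex.sin (κ * p) • Z ∧
    exp (-p • X) * Z * exp (p • X)
        = Complex.cos (κ * p) • Z + Complex.sin (κ * p) • Y :=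
  stmt12_general X Y Z κ hXY hZX p
end

section
/- Let X, Y, Z be n×n complex matrices with [X,Y] = κZ, [Y,Z] = κX, [Z,X] = κY for a nonzero real κ, and let a, b, c be real numbers with a > 0. Set p₁ = (1/κ)·arctan(b/a), q₁ = -(1/κ)·arctan(c/sqrt(a²+b²)), and r = sqrt(a²+b²+c²). Then exp(a•X + b•Y + c•Z) = exp(p₁•Z) * exp(q₁•Y) * exp(r•X) * exp(-q₁•Y) * exp(-p₁•Z). -/
/-!
Conjugation by `exp (t • Z)` acts on `span {X, Y, Z}` as the rotation by the angle `κ t` that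
fixes `Z`: both sides solve the ODE `M' = [Z, M]`. Hence `exp (p₁ • Z)` turns `exp (s • X + c • Z)`,
with `s = √(a² + b²)`, into `exp (a • X + b • Y + c • Z)`, and in the same way `exp (q₁ • Y)` turns
`exp (r • X)` into `exp (s • X + c • Z)`; the arctangents are exactly the angles of these two
rotations.
-/

namespace NormedSpace

section BanachAlgebra

variable {𝔸 : Type*} [NormedRing 𝔸] [NormedAlgebra ℚ 𝔸] [CompleteSpace 𝔸]

theorem exp_mul_exp_neg (x : 𝔸) : exp x * exp (-x) = 1 := by
  rw [← exp_add_of_commute (Commute.refl x).neg_right, add_neg_cancel, exp_zero]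

theorem exp_mul_exp_mul_exp_neg (x y : 𝔸) :
    exp x * exp y * exp (-x) = exp (exp x * y * exp (-x)) := by
  have hinv : exp (-x) * exp x = 1 := by simpa using exp_mul_exp_neg (-x)
  exact (exp_units_conj ⟨exp x, exp (-x), exp_mul_exp_neg x, hinv⟩ y).symm

variable [NormedAlgebra ℝ 𝔸]

theorem exp_smul_mul_mul_exp_neg_smul_of_hasDerivAt {A : 𝔸} {M : ℝ → 𝔸}
    (hM : ∀ u, HasDerivAt M (A * M u - M u * A) u) (t : ℝ) :
    exp (t • A) * M 0 * exp (-(t • A)) = M t := by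
  set f : ℝ → 𝔸 := fun u => exp (u • -A) * M u * exp (u • A)
  have hf : ∀ u, HasDerivAt f 0 u := by
    intro u
    have hcomm : exp (u • A) * A = A * exp (u • A) :=
      ((Commute.refl A).smul_left u).exp_left.eq
    refine (((hasDerivAt_exp_smul_const (-A) u).mul (hM u)).mul
      (hasDerivAt_exp_smul_const A u)).congr_deriv ?_
    rw [Pi.mul_apply, hcomm]
    noncomm_ring
  have hft : f t = M 0 := by
    rw [is_const_of_deriv_eq_zero (fun u => (hf u).differentiableAt) (fun u => (hf u).deriv) t 0]
    simp [f]
  calc exp (t • A) * M 0 * exp (-(t • A))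
      = exp (t • A) * exp (-(t • A)) * M t * (exp (t • A) * exp (-(t • A))) := by
        rw [← hft]
        simp only [f, smul_neg]
        noncomm_ring
    _ = M t := by rw [exp_mul_exp_neg, one_mul, mul_one]

theorem exp_smul_mul_mul_exp_neg_smul_eq_cos_add_sin {A B C : 𝔸} {μ : ℝ}
    (hB : A * B - B * A = μ • C) (hC : A * C - C * A = -μ • B) (t : ℝ) :
    exp (t • A) * B * exp (-(t • A)) = Real.cos (μ * t) • B + Real.sin (μ * t) • C := by
  set M : ℝ → 𝔸 := fun u => Real.cos (μ * u) • B + Real.sin (μ * u) • C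
  have hM : ∀ u, HasDerivAt M (A * M u - M u * A) u := by
    intro u
    have hcos := (((hasDerivAt_id u).const_mul μ).cos).smul_const B
    have hsin := (((hasDerivAt_id u).const_mul μ).sin).smul_const C
    refine (hcos.add hsin).congr_deriv ?_
    have hbracket : A * M u - M u * A
        = Real.cos (μ * u) • (A * B - B * A) + Real.sin (μ * u) • (A * C - C * A) := by
      simp only [M, mul_add, add_mul, mul_smul_comm, smul_mul_assoc, smul_sub]
      abel
    rw [hbracket, hB, hC]
    simp only [id, mul_one]
    module
  simpa [M] using exp_smul_mul_mul_exp_neg_smul_of_hasDerivAt hM t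

theorem exp_smul_mul_exp_mul_exp_neg_smul {A B C : 𝔸} {μ : ℝ}
    (hB : A * B - B * A = μ • C) (hC : A * C - C * A = -μ • B) (t ρ z : ℝ) :
    exp (t • A) * exp (ρ • B + z • A) * exp (-(t • A))
      = exp ((ρ * Real.cos (μ * t)) • B + (ρ * Real.sin (μ * t)) • C + z • A) := by
  have hA : exp (t • A) * A * exp (-(t • A)) = A := by
    rw [((Commute.refl A).smul_left t).exp_left.eq, mul_assoc, exp_mul_exp_neg, mul_one]
  rw [exp_mul_exp_mul_exp_neg]
  congr 1
  calc exp (t • A) * (ρ • B + z • A) * exp (-(t • A))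
      = ρ • (exp (t • A) * B * exp (-(t • A))) + z • (exp (t • A) * A * exp (-(t • A))) := by
        simp only [mul_add, add_mul, mul_smul_comm, smul_mul_assoc]
    _ = _ := by
      rw [exp_smul_mul_mul_exp_neg_smul_eq_cos_add_sin hB hC, hA]
      module

end BanachAlgebra

end NormedSpace

open NormedSpace

theorem Real.cos_arctan_div {x : ℝ} (hx : 0 < x) (y : ℝ) :
    Real.cos (Real.arctan (y / x)) = x / √(x ^ 2 + y ^ 2) := by
  have h : 1 + (y / x) ^ 2 = (√(x ^ 2 + y ^ 2) / x) ^ 2 := by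
    rw [div_pow, div_pow, Real.sq_sqrt (by positivity)]
    field_simp
  rw [Real.cos_arctan, h, Real.sqrt_sq (by positivity), one_div_div]

theorem Real.sin_arctan_div {x : ℝ} (hx : 0 < x) (y : ℝ) :
    Real.sin (Real.arctan (y / x)) = y / √(x ^ 2 + y ^ 2) := by
  have h : 1 + (y / x) ^ 2 = (√(x ^ 2 + y ^ 2) / x) ^ 2 := by
    rw [div_pow, div_pow, Real.sq_sqrt (by positivity)]
    field_simp
  rw [Real.sin_arctan, h, Real.sqrt_sq (by positivity), div_div_div_cancel_right₀ hx.ne']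

attribute [local instance] Matrix.linftyOpNormedRing Matrix.linftyOpNormedAlgebra

theorem stmt18 {n : ℕ} (X Y Z : Matrix (Fin n) (Fin n) ℂ) (κ : ℝ) (hκ : κ ≠ 0)
    (hXY : X * Y - Y * X = κ • Z) (hYZ : Y * Z - Z * Y = κ • X)
    (hZX : Z * X - X * Z = κ • Y) (a b c : ℝ) (ha : 0 < a)
    (p₁ q₁ r : ℝ)
    (hp₁ : p₁ = (1 / κ) * Real.arctan (b / a))
    (hq₁ : q₁ = -(1 / κ) * Real.arctan (c / Real.sqrt (a ^ 2 + b ^ 2)))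
    (hr : r = Real.sqrt (a ^ 2 + b ^ 2 + c ^ 2)) :
    exp (a • X + b • Y + c • Z)
      = exp (p₁ • Z) * exp (q₁ • Y) * exp (r • X) * exp (-q₁ • Y)
        * exp (-p₁ • Z) := by
  set s := √(a ^ 2 + b ^ 2) with hs_def
  have hs : 0 < s := by positivity
  have hr' : r = √(s ^ 2 + c ^ 2) := by rw [hr, Real.sq_sqrt (by positivity)]
  have hr0 : 0 < r := by rw [hr']; positivity
  have hangleZ : κ * p₁ = Real.arctan (b / a) := by rw [hp₁]; field_simp
  have hangleY : -κ * q₁ = Real.arctan (c / s) := by rw [hq₁]; field_simp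
  have hZY : Z * Y - Y * Z = -κ • X := by rw [neg_smul, ← hYZ, neg_sub]
  have hYX : Y * X - X * Y = -κ • Z := by rw [neg_smul, ← hXY, neg_sub]
  have hrotZ := exp_smul_mul_exp_mul_exp_neg_smul hZX hZY p₁ s c
  have hrotY := exp_smul_mul_exp_mul_exp_neg_smul hYX (by rwa [neg_neg]) q₁ r 0
  rw [hangleZ, Real.cos_arctan_div ha, Real.sin_arctan_div ha, ← hs_def] at hrotZ
  rw [hangleY, Real.cos_arctan_div hs, Real.sin_arctan_div hs, ← hr'] at hrotY
  simp only [zero_smul, add_zero] at hrotY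
  have houter :
      exp (p₁ • Z) * exp (s • X + c • Z) * exp (-(p₁ • Z)) = exp (a • X + b • Y + c • Z) :=
    hrotZ.trans (by congr 1; match_scalars <;> field_simp)
  have hinner : exp (q₁ • Y) * exp (r • X) * exp (-(q₁ • Y)) = exp (s • X + c • Z) :=
    hrotY.trans (by congr 1; match_scalars <;> field_simp)
  rw [← houter, ← hinner]
  simp only [neg_smul, mul_assoc]
end
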